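/- Let H : [0,∞)×ℝ^N×ℝ^N → ℝ be measurable in t, continuous in x and convex in p, and suppose there is λ : [0,∞)×ℝ^N → [0,∞), continuous in the second variable, such that |H(t,x,p)−H(t,x,q)| ≤ λ(t,x)|p−q| for all t,x,p,q and |H*(t,x,v)| ≤ λ(t,x) for all v ∈ dom H*(t,x,·). Set F(t,x) := dom H*(t,x,·). Then for every t ∈ [0,∞): F(t,x) is a nonempty, compact, convex subset of ℝ^N for every x; x ↦ F(t,x) is continuous with respect to the Hausdorff metric; and sup_{v∈F(t,x)} |v| ≤ λ(t,x) for every x. -/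

import Mathlib

open MeasureTheory Set Filter Topology

noncomputable section

namespace HJB

/-- `ℝ^n`. -/
abbrev Euc (n : ℕ) : Type := EuclideanSpace ℝ (Fin n)

/-! ### Legendre–Fenchel conjugate (in the last variable) -/

/-- The Legendre–Fenchel conjugate of a real-valued function on `ℝ^N`,
with values in `ℝ ∪ {±∞}` (it is never `⊥`). -/
def conj {N : ℕ} (h : Euc N → ℝ) (v : Euc N) : EReal :=
  ⨆ p : Euc N, (((inner ℝ v p : ℝ) - h p : ℝ) : EReal)

/-- The effective domain of the conjugate. -/
def domConj {N : ℕ} (h : Euc N → ℝ) : Set (Euc N) := {v | conj h v ≠ ⊤}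

/-- The epigraph of the conjugate. -/
def epiConj {N : ℕ} (h : Euc N → ℝ) : Set (Euc N × ℝ) :=
  {q | conj h q.1 ≤ (q.2 : EReal)}

/-- The graph of the conjugate. -/
def gphConj {N : ℕ} (h : Euc N → ℝ) : Set (Euc N × ℝ) :=
  {q | conj h q.1 = (q.2 : EReal)}

/-- `H*(t,x,v)`, the conjugate of a Hamiltonian in the last variable. -/
def Hstar {N : ℕ} (H : ℝ → Euc N → Euc N → ℝ) (t : ℝ) (x v : Euc N) : EReal :=
  conj (H t x) v

/-! ### Integrability classes -/

/-- `φ ∈ L¹([0,∞);ℝ)`. -/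
def MemL1 (φ : ℝ → ℝ) : Prop := IntegrableOn φ (Ici 0)

/-- `c ∈ L¹_loc([0,∞);[0,∞))`. -/
def MemL1loc (c : ℝ → ℝ) : Prop :=
  (∀ t, 0 ≤ c t) ∧ ∀ b : ℝ, IntegrableOn c (Icc 0 b)

/-- The class `𝓛_loc` : nonnegative, locally integrable on `[0,∞)`, with uniformly
small integrals over short subintervals. -/
def MemLloc (k : ℝ → ℝ) : Prop :=
  MemL1loc k ∧ ∀ ε > (0:ℝ), ∃ σ > (0:ℝ), ∀ a b : ℝ, 0 ≤ a → a ≤ b → b - a ≤ σ →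
    (∫ τ in a..b, k τ) ≤ ε

/-! ### Cones -/

/-- The Bouligand tangent cone `T_A(x) = {ζ : liminf_{τ→0+} dist(x+τζ,A)/τ = 0}`. -/
def tangentConeB {F : Type*} [NormedAddCommGroup F] [NormedSpace ℝ F]
    (A : Set F) (x : F) : Set F :=
  {ζ | ∀ ε > (0:ℝ), ∀ δ > (0:ℝ), ∃ τ : ℝ, 0 < τ ∧ τ < δ ∧
    Metric.infDist (x + τ • ζ) A ≤ ε * τ}

/-- The regular normal cone (polar of the tangent cone). -/
def regNormal {N : ℕ} (A : Set (Euc N)) (x : Euc N) : Set (Euc N) :=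
  {ξ | ∀ ζ ∈ tangentConeB A x, (inner ℝ ζ ξ : ℝ) ≤ 0}

/-- The limiting normal cone. -/
def limNormal {N : ℕ} (A : Set (Euc N)) (x : Euc N) : Set (Euc N) :=
  {ξ | ∃ xs ξs : ℕ → Euc N, (∀ n, xs n ∈ A ∧ ξs n ∈ regNormal A (xs n)) ∧
    Tendsto xs atTop (nhds x) ∧ Tendsto ξs atTop (nhds ξ)}

/-- The set `N¹_{y,η}` of unit vectors in closed convex hulls of limiting normal
cones at boundary points near `y`. -/
def N1set {N : ℕ} (A : Set (Euc N)) (y : Euc N) (η : ℝ) : Set (Euc N) :=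
  {n | ‖n‖ = 1 ∧ ∃ x ∈ frontier A ∩ Metric.closedBall y η,
    n ∈ closure (convexHull ℝ (limNormal A x))}

/-- The outward pointing condition (OPC) for a set-valued velocity map `FF`. -/
def OPC {N : ℕ} (A : Set (Euc N)) (FF : ℝ → Euc N → Set (Euc N)) : Prop :=
  ∃ η > (0:ℝ), ∃ r > (0:ℝ), ∃ Mc : ℝ, 0 ≤ Mc ∧
    ∀ᵐ t ∂(volume.restrict (Ici (0:ℝ))), ∀ y : Euc N,
      (∃ z ∈ frontier A, dist y z ≤ η) →
      ∀ v ∈ FF t y, (∀ ε > (0:ℝ), ∃ n ∈ N1set A y η, (inner ℝ n v : ℝ) ≤ ε) →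
        ∃ w ∈ FF t y, dist w v ≤ Mc ∧
          ∀ n ∈ N1set A y η, r ≤ (inner ℝ n w : ℝ) ∧ r ≤ (inner ℝ n (w - v) : ℝ)

/-- `(OPC)_H` : the OPC condition for `dom H*`. -/
def OPCH {N : ℕ} (H : ℝ → Euc N → Euc N → ℝ) (A : Set (Euc N)) : Prop :=
  OPC A (fun t y => domConj (H t y))

/-! ### Conditions (h)'' and (h)''_H -/

/-- The image set `(f,l)(t,x,U(t))`. -/
def flimg {N M : ℕ} (U : ℝ → Set (Euc M)) (f : ℝ → Euc N → Euc M → Euc N)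
    (l : ℝ → Euc N → Euc M → ℝ) (t : ℝ) (x : Euc N) : Set (Euc N × ℝ) :=
  (fun u => (f t x u, l t x u)) '' U t

/-- Condition (h)'' for a control triple `(U,f,l)`, a constraint set `A`, and
data functions `φ ∈ L¹`, `c ∈ L¹_loc`, `k, q ∈ 𝓛_loc`. -/
def Hpp {N M : ℕ} (U : ℝ → Set (Euc M)) (f : ℝ → Euc N → Euc M → Euc N)
    (l : ℝ → Euc N → Euc M → ℝ) (A : Set (Euc N)) (φ c k q : ℝ → ℝ) : Prop :=
  (∀ O : Set (Euc M), IsOpen O → MeasurableSet {t : ℝ | (U t ∩ O).Nonempty}) ∧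
  (∀ t, (U t).Nonempty ∧ IsClosed (U t)) ∧
  -- (h1)
  (∀ x u, Measurable fun t => f t x u) ∧
  (∀ x u, Measurable fun t => l t x u) ∧
  (∀ t, Continuous fun q : Euc N × Euc M => f t q.1 q.2) ∧
  (∀ t, Continuous fun q : Euc N × Euc M => l t q.1 q.2) ∧
  MemL1 φ ∧ (∀ t, 0 ≤ t → ∀ x u, φ t ≤ l t x u) ∧
  -- (h2)
  MemL1loc c ∧
  (∀ t, 0 ≤ t → ∀ x, ∀ u ∈ U t, ‖f t x u‖ + |l t x u| ≤ c t * (1 + ‖x‖)) ∧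
  -- (h3)
  (∀ t, 0 ≤ t → ∀ x, IsClosed (flimg U f l t x) ∧
    Tendsto (fun y => EMetric.hausdorffEdist (flimg U f l t y) (flimg U f l t x))
      (nhds x) (nhds 0)) ∧
  -- (h4)
  (∀ t, 0 ≤ t → ∀ x, Convex ℝ {y : Euc N × ℝ |
    ∃ u ∈ U t, ∃ r : ℝ, 0 ≤ r ∧ y = (f t x u, l t x u + r)}) ∧
  -- (h5)
  MemLloc q ∧
  (∀ t, 0 ≤ t → ∀ x ∈ frontier A, ∀ u ∈ U t, ‖f t x u‖ + |l t x u| ≤ q t) ∧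
  -- (h6)
  MemLloc k ∧
  (∀ t, 0 ≤ t → ∀ x y, ∀ u ∈ U t,
    ‖f t x u - f t y u‖ + |l t x u - l t y u| ≤ k t * ‖x - y‖)

/-- Condition (h)''_H for a Hamiltonian `H`, a constraint set `A`, a function `λ`,
and data functions `φ ∈ L¹`, `c ∈ L¹_loc`, `k, q ∈ 𝓛_loc`. -/
def HppH {N : ℕ} (H : ℝ → Euc N → Euc N → ℝ) (A : Set (Euc N))
    (lam : ℝ → Euc N → ℝ) (φ c k q : ℝ → ℝ) : Prop :=
  -- (H1)
  (∀ x p, Measurable fun t => H t x p) ∧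
  (∀ t p, Continuous fun x => H t x p) ∧
  (∀ t x, ConvexOn ℝ univ (H t x)) ∧
  -- (H2)
  MemL1 φ ∧ (∀ t, 0 ≤ t → ∀ x, H t x 0 ≤ -φ t) ∧
  -- regularity of λ and of the data
  (∀ t x, 0 ≤ lam t x) ∧
  (∀ x, Measurable fun t => lam t x) ∧
  (∀ t, Continuous fun x => lam t x) ∧
  MemL1loc c ∧ MemLloc k ∧ MemLloc q ∧
  -- (H3)
  (∀ t, 0 ≤ t → ∀ x, lam t x ≤ c t * (1 + ‖x‖)) ∧
  (∀ t, 0 ≤ t → ∀ x ∈ frontier A, lam t x ≤ q t) ∧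
  -- (H4)
  (∀ t, 0 ≤ t → ∀ x y, |lam t x - lam t y| ≤ k t * ‖x - y‖) ∧
  -- (H5)
  (∀ t, 0 ≤ t → ∀ x y p, |H t x p - H t y p| ≤ k t * (1 + ‖p‖) * ‖x - y‖) ∧
  -- (H6)
  (∀ t, 0 ≤ t → ∀ x p p', |H t x p - H t x p'| ≤ lam t x * ‖p - p'‖) ∧
  -- (H7)
  (∀ t, 0 ≤ t → ∀ x v, Hstar H t x v ≠ ⊤ → |(Hstar H t x v).toReal| ≤ lam t x)

/-! ### Trajectories and value functions -/

/-- `x` is locally absolutely continuous on `[t₀,∞)` with a.e. derivative `dx`. -/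
def IsTrajOn {N : ℕ} (x dx : ℝ → Euc N) (t₀ : ℝ) : Prop :=
  (∀ b : ℝ, IntegrableOn dx (Icc t₀ b)) ∧
  ∀ t, t₀ ≤ t → x t = x t₀ + ∫ s in t₀..t, dx s

/-- `S_H(t₀,x₀)` : admissible pairs (trajectory, a.e. derivative) for the
calculus-of-variations problem with constraint set `A`. -/
def SH {N : ℕ} (H : ℝ → Euc N → Euc N → ℝ) (A : Set (Euc N)) (t₀ : ℝ)
    (x₀ : Euc N) : Set ((ℝ → Euc N) × (ℝ → Euc N)) :=
  {p | IsTrajOn p.1 p.2 t₀ ∧ p.1 t₀ = x₀ ∧ (∀ t, t₀ ≤ t → p.1 t ∈ A) ∧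
    ∀ᵐ t ∂(volume.restrict (Ici t₀)), Hstar H t (p.1 t) (p.2 t) ≠ ⊤}

open Classical in
/-- The cost `∫_{t₀}^∞ H*(t,x(t),ẋ(t)) dt ∈ ℝ ∪ {+∞}` of a trajectory. -/
def trajCost {N : ℕ} (H : ℝ → Euc N → Euc N → ℝ) (t₀ : ℝ)
    (p : (ℝ → Euc N) × (ℝ → Euc N)) : EReal :=
  if (∀ᵐ t ∂(volume.restrict (Ici t₀)), Hstar H t (p.1 t) (p.2 t) ≠ ⊤) ∧
     IntegrableOn (fun t => (Hstar H t (p.1 t) (p.2 t)).toReal) (Ici t₀)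
  then (((∫ t in Ici t₀, (Hstar H t (p.1 t) (p.2 t)).toReal) : ℝ) : EReal)
  else ⊤

/-- The value function `V` of the calculus-of-variations problem. -/
def valueV {N : ℕ} (H : ℝ → Euc N → Euc N → ℝ) (A : Set (Euc N)) (t₀ : ℝ)
    (x₀ : Euc N) : EReal :=
  sInf (trajCost H t₀ '' SH H A t₀ x₀)

/-- `S_f(t₀,x₀)` : admissible trajectory-control pairs of the control system. -/
def Sf {N M : ℕ} (U : ℝ → Set (Euc M)) (f : ℝ → Euc N → Euc M → Euc N)
    (A : Set (Euc N)) (t₀ : ℝ) (x₀ : Euc N) :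
    Set ((ℝ → Euc N) × (ℝ → Euc M)) :=
  {p | Measurable p.2 ∧ (∀ᵐ t ∂(volume.restrict (Ici t₀)), p.2 t ∈ U t) ∧
    (∀ b : ℝ, IntegrableOn (fun s => f s (p.1 s) (p.2 s)) (Icc t₀ b)) ∧
    p.1 t₀ = x₀ ∧ (∀ t, t₀ ≤ t → p.1 t ∈ A) ∧
    ∀ t, t₀ ≤ t → p.1 t = x₀ + ∫ s in t₀..t, f s (p.1 s) (p.2 s)}

open Classical in
/-- The cost `∫_{t₀}^∞ l(t,x(t),u(t)) dt ∈ ℝ ∪ {+∞}` of a trajectory-control pair. -/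
def ctrlCost {N M : ℕ} (l : ℝ → Euc N → Euc M → ℝ) (t₀ : ℝ)
    (p : (ℝ → Euc N) × (ℝ → Euc M)) : EReal :=
  if IntegrableOn (fun t => l t (p.1 t) (p.2 t)) (Ici t₀)
  then (((∫ t in Ici t₀, l t (p.1 t) (p.2 t)) : ℝ) : EReal)
  else ⊤

/-- The value function `𝒱` of the optimal control problem. -/
def valueVc {N M : ℕ} (U : ℝ → Set (Euc M)) (f : ℝ → Euc N → Euc M → Euc N)
    (l : ℝ → Euc N → Euc M → ℝ) (A : Set (Euc N)) (t₀ : ℝ) (x₀ : Euc N) : EReal :=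
  sInf (ctrlCost l t₀ '' Sf U f A t₀ x₀)

/-! ### Conditions (B), (B)_H, (LB), (VIC) -/

/-- Condition `(B)_H`. -/
def CondBH {N : ℕ} (H : ℝ → Euc N → Euc N → ℝ) (A : Set (Euc N)) : Prop :=
  (∃ t₀ ≥ (0:ℝ), ∃ x₀ ∈ A, valueV H A t₀ x₀ ≠ ⊤) ∧
  ∃ T > (0:ℝ), ∃ ψ : ℝ → ℝ, (∀ t, 0 ≤ ψ t) ∧ IntegrableOn ψ (Ici T) ∧
    ∀ t₀, T ≤ t₀ → ∀ x₀ ∈ A, valueV H A t₀ x₀ ≠ ⊤ →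
      ∀ p ∈ SH H A t₀ x₀,
        ∀ᵐ t ∂(volume.restrict (Ici t₀)), |(Hstar H t (p.1 t) (p.2 t)).toReal| ≤ ψ t

/-- Condition `(B)`. -/
def CondB {N M : ℕ} (U : ℝ → Set (Euc M)) (f : ℝ → Euc N → Euc M → Euc N)
    (l : ℝ → Euc N → Euc M → ℝ) (A : Set (Euc N)) (T : ℝ) (ψ : ℝ → ℝ) : Prop :=
  (∃ t₀ ≥ (0:ℝ), ∃ x₀ ∈ A, valueVc U f l A t₀ x₀ ≠ ⊤) ∧
  0 < T ∧ (∀ t, 0 ≤ ψ t) ∧ IntegrableOn ψ (Ici T) ∧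
    ∀ t₀, T ≤ t₀ → ∀ x₀ ∈ A, valueVc U f l A t₀ x₀ ≠ ⊤ →
      ∀ p ∈ Sf U f A t₀ x₀,
        ∀ᵐ t ∂(volume.restrict (Ici t₀)), |l t (p.1 t) (p.2 t)| ≤ ψ t

/-- Condition (LB), with the family `ψ r` of integrable bounds. -/
def CondLB {N M : ℕ} (U : ℝ → Set (Euc M)) (f : ℝ → Euc N → Euc M → Euc N)
    (l : ℝ → Euc N → Euc M → ℝ) (A : Set (Euc N)) (ψ : ℝ → ℝ → ℝ) : Prop :=
  ∀ r, 0 < r → (∀ t, 0 ≤ ψ r t) ∧ IntegrableOn (ψ r) (Ici 0) ∧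
    ∀ t₀, 0 ≤ t₀ → ∀ x₀ ∈ A, ‖x₀‖ ≤ r → ∀ p ∈ Sf U f A t₀ x₀,
      ∀ᵐ t ∂(volume.restrict (Ici t₀)), |l t (p.1 t) (p.2 t)| ≤ ψ r t

/-- Condition `(VIC)_H`. -/
def VICH {N : ℕ} (H : ℝ → Euc N → Euc N → ℝ) (A : Set (Euc N)) : Prop :=
  ∃ C : Set ℝ, C ⊆ Ioi 0 ∧ volume (Ioi 0 \ C) = 0 ∧
    ∀ t ∈ C, ∀ x ∈ A,
      (∃ v, Hstar H t x v ≠ ⊤ ∧ v ∈ tangentConeB A x) ∧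
      ∀ v, Hstar H t x v ≠ ⊤ → -v ∈ tangentConeB A x

/-- Condition (VIC) for a dynamics `f` with controls `U`. -/
def VICf {N M : ℕ} (U : ℝ → Set (Euc M)) (f : ℝ → Euc N → Euc M → Euc N)
    (A : Set (Euc N)) : Prop :=
  ∃ C : Set ℝ, C ⊆ Ioi 0 ∧ volume (Ioi 0 \ C) = 0 ∧
    ∀ t ∈ C, ∀ x ∈ A,
      (∃ u ∈ U t, f t x u ∈ tangentConeB A x) ∧
      ∀ u ∈ U t, -(f t x u) ∈ tangentConeB A x

/-! ### Weak solutions -/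

/-- The time–state–value space `ℝ × ℝ^N × ℝ`. -/
abbrev TXR (N : ℕ) : Type := ℝ × Euc N × ℝ

/-- The natural pairing on `ℝ × ℝ^N × ℝ`. -/
def pairTX {N : ℕ} (p q : TXR N) : ℝ :=
  p.1 * q.1 + (inner ℝ p.2.1 q.2.1 : ℝ) + p.2.2 * q.2.2

/-- The regular normal cone in `ℝ × ℝ^N × ℝ` (polar of the tangent cone). -/
def regNormalTX {N : ℕ} (S : Set (TXR N)) (z : TXR N) : Set (TXR N) :=
  {ξ | ∀ ζ ∈ tangentConeB S z, pairTX ζ ξ ≤ 0}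

/-- The epigraph of an extended-real function of `(t,x)`. -/
def epiTX {N : ℕ} (W : ℝ → Euc N → EReal) : Set (TXR N) :=
  {z | W z.1 z.2.1 ≤ (z.2.2 : EReal)}

/-- The epigraph of `W(t,·)`. -/
def epiX {N : ℕ} (W : ℝ → Euc N → EReal) (t : ℝ) : Set (Euc N × ℝ) :=
  {q | W t q.1 ≤ (q.2 : EReal)}

/-- The Fréchet subdifferential of `W` at `(t,x)` (only meaningful when `W t x` is finite). -/
def frSubdiff {N : ℕ} (W : ℝ → Euc N → EReal) (t : ℝ) (x : Euc N) :
    Set (ℝ × Euc N) :=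
  {p | ∀ ε > (0:ℝ), ∃ δ > (0:ℝ), ∀ s : ℝ, ∀ y : Euc N,
    dist ((s, y) : ℝ × Euc N) (t, x) < δ →
    ((((W t x).toReal + p.1 * (s - t) + (inner ℝ p.2 (y - x) : ℝ)
      - ε * dist ((s, y) : ℝ × Euc N) (t, x)) : ℝ) : EReal) ≤ W s y}

/-- A lower semicontinuous `W : [0,∞) × A → ℝ ∪ {+∞}` is a weak solution of
`-W_t + H(t,x,-W_x) = 0` on `(0,∞) × A`. -/
def IsWeakSolution {N : ℕ} (H : ℝ → Euc N → Euc N → ℝ) (A : Set (Euc N))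
    (W : ℝ → Euc N → EReal) : Prop :=
  ∃ C : Set ℝ, C ⊆ Ioi 0 ∧ volume (Ioi 0 \ C) = 0 ∧
    (∀ t ∈ C, ∀ x ∈ frontier A, W t x ≠ ⊤ →
      (∀ p ∈ frSubdiff W t x, 0 ≤ -p.1 + H t x (-p.2)) ∧
      (∀ pt : ℝ, ∀ px : Euc N,
        ((pt, px, (0:ℝ)) : TXR N) ∈ regNormalTX (epiTX W) (t, x, (W t x).toReal) →
        ∀ ε > (0:ℝ), ∃ v : Euc N, Hstar H t x v ≠ ⊤ ∧ pt - ε ≤ (inner ℝ v (-px) : ℝ))) ∧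
    (∀ t ∈ C, ∀ x ∈ interior A, W t x ≠ ⊤ →
      (∀ p ∈ frSubdiff W t x, -p.1 + H t x (-p.2) = 0) ∧
      (∀ pt : ℝ, ∀ px : Euc N,
        ((pt, px, (0:ℝ)) : TXR N) ∈ regNormalTX (epiTX W) (t, x, (W t x).toReal) →
        IsLUB {r : ℝ | ∃ v : Euc N, Hstar H t x v ≠ ⊤ ∧ r = (inner ℝ v (-px) : ℝ)} pt))

/-- Local absolute continuity of a set-valued map `t ⇝ P(t)` with nonempty closed
values. -/
def LocAbsCont {F : Type*} [MetricSpace F] (P : ℝ → Set F) : Prop :=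
  (∀ t, 0 ≤ t → (P t).Nonempty ∧ IsClosed (P t)) ∧
  ∀ S T : ℝ, 0 ≤ S → S ≤ T → ∀ ε > (0:ℝ), ∀ K : Set F, IsCompact K →
    ∃ δ > (0:ℝ), ∀ m : ℕ, ∀ s t : ℕ → ℝ,
      (∀ i, i < m → S ≤ s i ∧ s i < t i ∧ t i ≤ T) →
      (∀ i, i + 1 < m → t i ≤ s (i + 1)) →
      (∑ i ∈ Finset.range m, (t i - s i)) < δ →
      ∃ e : ℕ → ℝ,
        (∀ i, i < m → 0 ≤ e i ∧
          (P (t i) ∩ K ⊆ {y | ∃ z ∈ P (s i), dist y z ≤ e i}) ∧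
          (P (s i) ∩ K ⊆ {y | ∃ z ∈ P (t i), dist y z ≤ e i})) ∧
        (∑ i ∈ Finset.range m, e i) < ε

/-! ### The class 𝓗 -/

/-- The rescaled Hamiltonian `IH(t,x,p) := θ(t)⁻¹ H(t,x,θ(t)p)`. -/
def IHam {N : ℕ} (H : ℝ → Euc N → Euc N → ℝ) (θ : ℝ → ℝ) :
    ℝ → Euc N → Euc N → ℝ :=
  fun t x p => (θ t)⁻¹ * H t x (θ t • p)

/-- The `L^∞([0,∞))` norm. -/
def supNormInfty (θ : ℝ → ℝ) : ℝ :=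
  (essSup (fun t => ENNReal.ofReal |θ t|) (volume.restrict (Ici (0:ℝ)))).toReal


/-- The class `𝓗(θ,λ,{ψ_r},φ,c,A)`. -/
def ClassH {N : ℕ} (H : ℝ → Euc N → Euc N → ℝ) (θ : ℝ → ℝ)
    (lam : ℝ → Euc N → ℝ) (ψ : ℝ → ℝ → ℝ) (φ c : ℝ → ℝ) (A : Set (Euc N)) : Prop :=
  (∀ t, 0 < θ t) ∧ Measurable θ ∧
  essSup (fun t => ENNReal.ofReal |θ t|) (volume.restrict (Ici (0:ℝ))) ≠ ⊤ ∧
  (∀ r, 0 < r → (∀ t, 0 ≤ ψ r t) ∧ IntegrableOn (ψ r) (Ici 0)) ∧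
  (∃ k q : ℝ → ℝ, HppH (IHam H θ) A lam φ c k q) ∧
  ∀ r, 0 < r → ∀ t₀, 0 ≤ t₀ → ∀ x₀ ∈ A, ‖x₀‖ ≤ r →
    ∀ p ∈ SH (IHam H θ) A t₀ x₀,
      ∀ᵐ t ∂(volume.restrict (Ici t₀)), θ t * lam t (p.1 t) ≤ ψ r t

/-! Under the bound `|H*| ≤ λ` the domain `F(t,x)` is the sublevel set `{H*(t,x,·) ≤ λ(t,x)}`,
an intersection of closed half-spaces, and the Lipschitz bound on `H(t,x,·)` confines it to the
ball of radius `λ(t,x)`; it is nonempty because `H(t,x,·)` has a subgradient (Hahn–Banach applied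
to its strict epigraph).

For Hausdorff continuity compare support functions: if `|H(t,y,·) - H(t,x,·)| ≤ 1` on the sphere
of radius `s` and `w` is a subgradient of `H(t,x,·)` at `s p`, `‖p‖ = 1`, then every `v ∈ F(t,y)`
satisfies `⟪v, p⟫ ≤ ⟪w, p⟫ + (λ(t,y) + λ(t,x) + 1) / s`, and projecting `v` onto the closed
convex set `F(t,x)` turns these inequalities into `dist (v, F(t,x)) ≤ (λ(t,y) + λ(t,x) + 1) / s`.
The closeness on the sphere holds for `y` near `x` since `H(t,·,·)` is jointly continuous. -/

open scoped RealInnerProductSpace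

section Conjugate

variable {N : ℕ} {h : Euc N → ℝ}

lemma coe_sub_le_conj (v p : Euc N) : ((⟪v, p⟫ - h p : ℝ) : EReal) ≤ conj h v :=
  le_iSup (fun p => ((⟪v, p⟫ - h p : ℝ) : EReal)) p

lemma conj_ne_bot (v : Euc N) : conj h v ≠ ⊥ :=
  ne_bot_of_le_ne_bot (EReal.coe_ne_bot _) (coe_sub_le_conj v 0)

lemma conj_le_coe_iff {v : Euc N} {c : ℝ} : conj h v ≤ c ↔ ∀ p, ⟪v, p⟫ - h p ≤ c := by
  simp only [conj, iSup_le_iff, EReal.coe_le_coe_iff]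

lemma mem_domConj_of_conj_le {v : Euc N} {c : ℝ} (hc : conj h v ≤ c) : v ∈ domConj h :=
  ne_top_of_le_ne_top (EReal.coe_ne_top c) hc

lemma exists_conj_le_of_mem_domConj {v : Euc N} (hv : v ∈ domConj h) :
    ∃ c : ℝ, conj h v ≤ c :=
  ⟨(conj h v).toReal, (EReal.coe_toReal hv (conj_ne_bot v)).ge⟩

lemma conj_le_of_mem_domConj {L : ℝ} (hb : ∀ v, conj h v ≠ ⊤ → |(conj h v).toReal| ≤ L)
    {v : Euc N} (hv : v ∈ domConj h) : conj h v ≤ L := by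
  rw [← EReal.coe_toReal hv (conj_ne_bot v)]
  exact EReal.coe_le_coe_iff.2 ((le_abs_self _).trans (hb v hv))

lemma domConj_eq_iInter {L : ℝ} (hb : ∀ v, conj h v ≠ ⊤ → |(conj h v).toReal| ≤ L) :
    domConj h = ⋂ p, {v | ⟪v, p⟫ ≤ h p + L} := by
  ext v
  simp only [mem_iInter, mem_ofPred_eq, ← sub_le_iff_le_add', ← conj_le_coe_iff]
  exact ⟨conj_le_of_mem_domConj hb, mem_domConj_of_conj_le⟩

lemma isClosed_domConj {L : ℝ} (hb : ∀ v, conj h v ≠ ⊤ → |(conj h v).toReal| ≤ L) :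
    IsClosed (domConj h) := by
  rw [domConj_eq_iInter hb]
  exact isClosed_iInter fun p => isClosed_le (continuous_id.inner continuous_const) continuous_const

lemma convex_domConj {L : ℝ} (hb : ∀ v, conj h v ≠ ⊤ → |(conj h v).toReal| ≤ L) :
    Convex ℝ (domConj h) := by
  rw [domConj_eq_iInter hb]
  exact convex_iInter fun p =>
    convex_halfSpace_le ⟨fun v w => inner_add_left v w p, fun c v => real_inner_smul_left v p c⟩ _

lemma norm_le_of_mem_domConj {L : ℝ} (hL : 0 ≤ L) (hlip : ∀ p q, |h p - h q| ≤ L * ‖p - q‖)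
    {v : Euc N} (hv : v ∈ domConj h) : ‖v‖ ≤ L := by
  obtain ⟨c, hc⟩ := exists_conj_le_of_mem_domConj hv
  have hray : ∀ s : ℝ, 0 < s → s * (‖v‖ * (‖v‖ - L)) ≤ c + h 0 := by
    intro s hs
    have hconj := conj_le_coe_iff.1 hc (s • v)
    have hgrowth := (abs_le.1 (hlip (s • v) 0)).2
    rw [real_inner_smul_right, real_inner_self_eq_norm_mul_norm] at hconj
    rw [sub_zero, norm_smul, Real.norm_of_nonneg hs.le] at hgrowth
    nlinarith
  by_contra! hvL
  have hpos : 0 < ‖v‖ * (‖v‖ - L) := mul_pos (hL.trans_lt hvL) (sub_pos.2 hvL)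
  have := hray ((|c + h 0| + 1) / (‖v‖ * (‖v‖ - L))) (by positivity)
  rw [div_mul_cancel₀ _ hpos.ne'] at this
  linarith [le_abs_self (c + h 0)]

lemma isCompact_domConj {L : ℝ} (hL : 0 ≤ L) (hlip : ∀ p q, |h p - h q| ≤ L * ‖p - q‖)
    (hb : ∀ v, conj h v ≠ ⊤ → |(conj h v).toReal| ≤ L) : IsCompact (domConj h) :=
  (isCompact_closedBall 0 L).of_isClosed_subset (isClosed_domConj hb) fun _ hv =>
    mem_closedBall_zero_iff.2 (norm_le_of_mem_domConj hL hlip hv)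

lemma exists_conj_eq (hconv : ConvexOn ℝ univ h) (q : Euc N) :
    ∃ v, conj h v = ((⟪v, q⟫ - h q : ℝ) : EReal) := by
  have hcont : Continuous h := by
    simpa only [interior_univ, continuousOn_univ] using hconv.continuousOn_interior
  obtain ⟨f, hf⟩ := geometric_hahn_banach_open_point hconv.convex_strict_epigraph
    (by simpa only [mem_univ, true_and] using isOpen_lt (by fun_prop : Continuous fun z : Euc N × ℝ => h z.1) continuous_snd)
    (x := (q, h q)) fun hq => lt_irrefl _ hq.2
  set g := f.comp (ContinuousLinearMap.inl ℝ (Euc N) ℝ)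
  set c := f (0, 1)
  have hf_apply : ∀ p r, f (p, r) = g p + r * c := by
    intro p r
    rw [show ((p, r) : Euc N × ℝ) = (p, 0) + r • (0, 1) by simp, map_add, map_smul,
      smul_eq_mul]
    rfl
  have hc : c < 0 := by
    have := hf (q, h q + 1) (by simp)
    rw [hf_apply, hf_apply] at this
    linarith
  have hc0 : c ≠ 0 := hc.ne
  have hsub : ∀ p, g p + h p * c ≤ g q + h q * c := by
    intro p
    refine le_of_forall_pos_lt_add fun ε hε => ?_
    have := hf (p, h p + ε / -c) ⟨mem_univ _, by linarith [div_pos hε (neg_pos.2 hc)]⟩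
    rw [hf_apply, hf_apply] at this
    have hε' : (h p + ε / -c) * c = h p * c - ε := by field_simp; ring
    linarith
  refine ⟨(-c)⁻¹ • (InnerProductSpace.toDual ℝ (Euc N)).symm g,
    le_antisymm (conj_le_coe_iff.2 fun p => ?_) (coe_sub_le_conj _ q)⟩
  simp only [real_inner_smul_left, InnerProductSpace.toDual_symm_apply]
  rw [← sub_nonneg]
  have hscaled : (-c)⁻¹ * g q - h q - ((-c)⁻¹ * g p - h p)
      = (-c)⁻¹ * (g q + h q * c - (g p + h p * c)) := by
    field_simp
    ring
  rw [hscaled]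
  exact mul_nonneg (inv_nonneg.2 (by linarith)) (sub_nonneg.2 (hsub p))

lemma domConj_nonempty (hconv : ConvexOn ℝ univ h) : (domConj h).Nonempty :=
  let ⟨v, hv⟩ := exists_conj_eq hconv 0
  ⟨v, mem_domConj_of_conj_le hv.le⟩

end Conjugate

lemma exists_dist_le_of_forall_inner_le {E : Type*} [NormedAddCommGroup E]
    [InnerProductSpace ℝ E] {A : Set E} (hA : Convex ℝ A) (hAc : IsComplete A)
    (hAne : A.Nonempty) {v : E} {ε : ℝ} (hε : 0 ≤ ε)
    (hsupp : ∀ p, ∃ w ∈ A, ⟪v, p⟫ ≤ ⟪w, p⟫ + ε * ‖p‖) : ∃ w ∈ A, dist v w ≤ ε := by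
  obtain ⟨w₀, hw₀, hproj⟩ := exists_norm_eq_iInf_of_complete_convex hAne hAc hA v
  have hobtuse := (norm_eq_iInf_iff_real_inner_le_zero hA hw₀).1 hproj
  refine ⟨w₀, hw₀, ?_⟩
  obtain ⟨w, hw, hvw⟩ := hsupp (v - w₀)
  have hsq : ‖v - w₀‖ ^ 2 ≤ ε * ‖v - w₀‖ := by
    have := hobtuse w hw
    rw [← real_inner_self_eq_norm_sq]
    simp only [inner_sub_left, inner_sub_right, real_inner_comm] at this hvw ⊢
    linarith
  rw [dist_eq_norm]
  nlinarith [norm_nonneg (v - w₀)]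

section Hausdorff

variable {N : ℕ} {h₁ h₂ : Euc N → ℝ} {L₁ L₂ : ℝ}

lemma exists_mem_domConj_inner_le (hb₁ : ∀ v, conj h₁ v ≠ ⊤ → |(conj h₁ v).toReal| ≤ L₁)
    (hb₂ : ∀ v, conj h₂ v ≠ ⊤ → |(conj h₂ v).toReal| ≤ L₂) (hconv₂ : ConvexOn ℝ univ h₂)
    {v : Euc N} (hv : v ∈ domConj h₁) (u : Euc N) :
    ∃ w ∈ domConj h₂, ⟪v, u⟫ ≤ ⟪w, u⟫ + (h₁ u - h₂ u) + L₁ + L₂ := by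
  obtain ⟨w, hw⟩ := exists_conj_eq hconv₂ u
  have hwdom : w ∈ domConj h₂ := mem_domConj_of_conj_le hw.le
  have hv_le : ⟪v, u⟫ - h₁ u ≤ L₁ := conj_le_coe_iff.1 (conj_le_of_mem_domConj hb₁ hv) u
  have hw_ge : -L₂ ≤ ⟪w, u⟫ - h₂ u := by
    have := hb₂ w hwdom
    rw [hw, EReal.toReal_coe] at this
    exact (abs_le.1 this).1
  exact ⟨w, hwdom, by linarith⟩

lemma exists_dist_le_of_mem_domConj (hL₁ : 0 ≤ L₁) (hL₂ : 0 ≤ L₂)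
    (hb₁ : ∀ v, conj h₁ v ≠ ⊤ → |(conj h₁ v).toReal| ≤ L₁)
    (hb₂ : ∀ v, conj h₂ v ≠ ⊤ → |(conj h₂ v).toReal| ≤ L₂) (hconv₂ : ConvexOn ℝ univ h₂)
    {s : ℝ} (hs : 0 < s) (hnear : ∀ u, ‖u‖ = s → h₁ u ≤ h₂ u + 1)
    {v : Euc N} (hv : v ∈ domConj h₁) :
    ∃ w ∈ domConj h₂, dist v w ≤ (L₁ + L₂ + 1) / s := by
  refine exists_dist_le_of_forall_inner_le (convex_domConj hb₂)
    (isClosed_domConj hb₂).isComplete (domConj_nonempty hconv₂) (by positivity) fun p => ?_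
  rcases eq_or_ne p 0 with rfl | hp
  · obtain ⟨w, hw⟩ := domConj_nonempty hconv₂
    exact ⟨w, hw, by simp⟩
  have hk : 0 < s / ‖p‖ := div_pos hs (norm_pos_iff.2 hp)
  have hu : ‖(s / ‖p‖) • p‖ = s := by
    rw [norm_smul, Real.norm_of_nonneg hk.le, div_mul_cancel₀ _ (norm_ne_zero_iff.2 hp)]
  obtain ⟨w, hw, hvw⟩ := exists_mem_domConj_inner_le hb₁ hb₂ hconv₂ hv ((s / ‖p‖) • p)
  refine ⟨w, hw, le_of_mul_le_mul_left ?_ hk⟩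
  have hscale : s / ‖p‖ * ((L₁ + L₂ + 1) / s * ‖p‖) = L₁ + L₂ + 1 := by
    field_simp
  rw [real_inner_smul_right, real_inner_smul_right] at hvw
  rw [mul_add, hscale]
  linarith [hnear _ hu]

lemma hausdorffEDist_domConj_le (hL₁ : 0 ≤ L₁) (hL₂ : 0 ≤ L₂)
    (hb₁ : ∀ v, conj h₁ v ≠ ⊤ → |(conj h₁ v).toReal| ≤ L₁)
    (hb₂ : ∀ v, conj h₂ v ≠ ⊤ → |(conj h₂ v).toReal| ≤ L₂)
    (hconv₁ : ConvexOn ℝ univ h₁) (hconv₂ : ConvexOn ℝ univ h₂)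
    {s : ℝ} (hs : 0 < s) (hnear : ∀ u, ‖u‖ = s → |h₁ u - h₂ u| ≤ 1) :
    Metric.hausdorffEDist (domConj h₁) (domConj h₂) ≤ ENNReal.ofReal ((L₁ + L₂ + 1) / s) := by
  refine Metric.hausdorffEDist_le_of_mem_edist (fun v hv => ?_) (fun v hv => ?_)
  · obtain ⟨w, hw, hd⟩ := exists_dist_le_of_mem_domConj hL₁ hL₂ hb₁ hb₂ hconv₂ hs
      (fun u hu => by linarith [(abs_le.1 (hnear u hu)).2]) hv
    exact ⟨w, hw, edist_dist v w ▸ ENNReal.ofReal_le_ofReal hd⟩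
  · obtain ⟨w, hw, hd⟩ := exists_dist_le_of_mem_domConj hL₂ hL₁ hb₂ hb₁ hconv₁ hs
      (fun u hu => by linarith [(abs_le.1 (hnear u hu)).1]) hv
    exact ⟨w, hw, edist_dist v w ▸ ENNReal.ofReal_le_ofReal (by rwa [add_comm L₁])⟩

end Hausdorff

section Family

variable {X E : Type*} [TopologicalSpace X]

lemma continuous_uncurry_of_lipschitz [SeminormedAddCommGroup E] {g : X → E → ℝ} {L : X → ℝ}
    (hL : Continuous L) (hg : ∀ p, Continuous (g · p))
    (hlip : ∀ y p q, |g y p - g y q| ≤ L y * ‖p - q‖) : Continuous ↿g := by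
  refine continuous_iff_continuousAt.2 fun ⟨x, q⟩ => ?_
  set U := {y | L y < L x + 1}
  have hU : IsOpen U := isOpen_lt hL continuous_const
  have hcontOn : ContinuousOn ↿g (U ×ˢ univ) :=
    continuousOn_prod_of_continuousOn_lipschitzOnWith' _ (L x + 1).toNNReal
      (fun y hy => LipschitzOnWith.of_dist_le_mul fun p _ p' _ => by
        rw [Real.dist_eq, dist_eq_norm]
        refine (hlip y p p').trans (mul_le_mul_of_nonneg_right ?_ (norm_nonneg _))
        exact hy.le.trans (Real.le_coe_toNNReal _))
      (fun p _ => (hg p).continuousOn)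
  exact hcontOn.continuousAt (prod_mem_nhds (hU.mem_nhds (show L x < L x + 1 from lt_add_one _)) univ_mem)

lemma eventually_forall_abs_sub_lt [TopologicalSpace E] {g : X → E → ℝ} (hg : Continuous ↿g)
    {K : Set E} (hK : IsCompact K) (x : X) {ε : ℝ} (hε : 0 < ε) :
    ∀ᶠ y in 𝓝 x, ∀ q ∈ K, |g y q - g x q| < ε := by
  refine hK.eventually_forall_of_forall_eventually fun q _ => ?_
  have hdiff : Continuous fun z : X × E => |g z.1 z.2 - g x z.2| :=
    (hg.sub (hg.comp (continuous_const.prodMk continuous_snd))).abs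
  exact (hdiff.tendsto (x, q)).eventually_lt_const (by simpa using hε)

theorem tendsto_hausdorffEDist_domConj {N : ℕ} {g : X → Euc N → ℝ} {L : X → ℝ}
    (hL : Continuous L) (hL₀ : ∀ y, 0 ≤ L y) (hg : ∀ p, Continuous (g · p))
    (hconv : ∀ y, ConvexOn ℝ univ (g y)) (hlip : ∀ y p q, |g y p - g y q| ≤ L y * ‖p - q‖)
    (hb : ∀ y v, conj (g y) v ≠ ⊤ → |(conj (g y) v).toReal| ≤ L y) (x : X) :
    Tendsto (fun y => Metric.hausdorffEDist (domConj (g y)) (domConj (g x))) (𝓝 x) (𝓝 0) := by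
  refine ENNReal.tendsto_nhds_zero.2 fun ε hε => ?_
  obtain ⟨r, -, hr, hrε⟩ := ENNReal.lt_iff_exists_real_btwn.1 hε
  rw [ENNReal.ofReal_pos] at hr
  set s := (2 * L x + 2) / r
  have hs : 0 < s := by have := hL₀ x; positivity
  have hL_near : ∀ᶠ y in 𝓝 x, L y < L x + 1 := (hL.tendsto x).eventually_lt_const (lt_add_one _)
  have hg_near := eventually_forall_abs_sub_lt (continuous_uncurry_of_lipschitz hL hg hlip)
    (isCompact_sphere 0 s) x one_pos
  filter_upwards [hL_near, hg_near] with y hLy hgy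
  refine (hausdorffEDist_domConj_le (hL₀ y) (hL₀ x) (hb y) (hb x) (hconv y) (hconv x) hs
    fun u hu => (hgy u (mem_sphere_zero_iff_norm.2 hu)).le).trans (le_trans ?_ hrε.le)
  refine ENNReal.ofReal_le_ofReal ((div_le_iff₀ hs).2 ?_)
  have hrs : r * s = 2 * L x + 2 := mul_div_cancel₀ _ hr.ne'
  linarith

end Family

theorem stmt_4_general {N : ℕ} (H : ℝ → Euc N → Euc N → ℝ) (lam : ℝ → Euc N → ℝ)
    (hcont : ∀ t p, Continuous fun x => H t x p)
    (hconv : ∀ t x, ConvexOn ℝ univ (H t x))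
    (hlamnn : ∀ t x, 0 ≤ lam t x)
    (hlamcont : ∀ t, Continuous fun x => lam t x)
    (hH6 : ∀ t, 0 ≤ t → ∀ (x : Euc N) (p p' : Euc N),
      |H t x p - H t x p'| ≤ lam t x * ‖p - p'‖)
    (hH7 : ∀ t, 0 ≤ t → ∀ (x v : Euc N), Hstar H t x v ≠ ⊤ →
      |(Hstar H t x v).toReal| ≤ lam t x) :
    ∀ t, 0 ≤ t →
      (∀ x : Euc N, (domConj (H t x)).Nonempty ∧ IsCompact (domConj (H t x)) ∧
        Convex ℝ (domConj (H t x))) ∧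
      (∀ x : Euc N, Tendsto
        (fun y => EMetric.hausdorffEdist (domConj (H t y)) (domConj (H t x)))
        (nhds x) (nhds 0)) ∧
      (∀ x : Euc N, ∀ v ∈ domConj (H t x), ‖v‖ ≤ lam t x) := by
  intro t ht
  exact ⟨fun x => ⟨domConj_nonempty (hconv t x),
      isCompact_domConj (hlamnn t x) (hH6 t ht x) (hH7 t ht x), convex_domConj (hH7 t ht x)⟩,
    tendsto_hausdorffEDist_domConj (hlamcont t) (hlamnn t) (hcont t) (hconv t) (hH6 t ht)
      (hH7 t ht),
    fun x _ hv => norm_le_of_mem_domConj (hlamnn t x) (hH6 t ht x) hv⟩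

/-- Corollary `wrow-wm`, (M8)–(M10). Under (H1), (H6), (H7),
the sets `F(t,x) = dom H*(t,x,·)` are nonempty compact convex, depend continuously
on `x` in the Hausdorff metric, and satisfy `‖F(t,x)‖ ≤ λ(t,x)`. -/
theorem stmt_4 {N : ℕ} (H : ℝ → Euc N → Euc N → ℝ) (lam : ℝ → Euc N → ℝ)
    (hmeas : ∀ x p, Measurable fun t => H t x p)
    (hcont : ∀ t p, Continuous fun x => H t x p)
    (hconv : ∀ t x, ConvexOn ℝ univ (H t x))
    (hlamnn : ∀ t x, 0 ≤ lam t x)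
    (hlamcont : ∀ t, Continuous fun x => lam t x)
    (hH6 : ∀ t, 0 ≤ t → ∀ (x : Euc N) (p p' : Euc N),
      |H t x p - H t x p'| ≤ lam t x * ‖p - p'‖)
    (hH7 : ∀ t, 0 ≤ t → ∀ (x v : Euc N), Hstar H t x v ≠ ⊤ →
      |(Hstar H t x v).toReal| ≤ lam t x) :
    ∀ t, 0 ≤ t →
      (∀ x : Euc N, (domConj (H t x)).Nonempty ∧ IsCompact (domConj (H t x)) ∧
        Convex ℝ (domConj (H t x))) ∧
      (∀ x : Euc N, Tendsto
        (fun y => EMetric.hausdorffEdist (domConj (H t y)) (domConj (H t x)))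
        (nhds x) (nhds 0)) ∧
      (∀ x : Euc N, ∀ v ∈ domConj (H t x), ‖v‖ ≤ lam t x) :=
  stmt_4_general H lam hcont hconv hlamnn hlamcont hH6 hH7

end HJB
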